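/- Let D be a finite digraph with two distinct vertices s, t ∈ V(D), and let m = |A(D)|. Let D* be obtained from D by adding two new vertices s' and t' and the arcs s's and tt'. Assign cost 1 to every arc of D*; assign to each arc of D the matrix M with M11 = M21 = M22 = 1 and M12 = 0, to the arc s's the matrix S with S11 = m and all other entries 0, and to the arc tt' the matrix T with T22 = m and all other entries 0. Then the maximum of w^P(D*) over all partitions P of V(D*) equals 3m minus the minimum, over all partitions (X1, X2) of V(D) with s ∈ X1 and t ∈ X2, of the number of arcs of D from X1 to X2. -/
import Mathlib


/-- The weight `w^P(uv)` of an arc `uv` (with cost `c uv` and assigned matrix `f uv`)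
under the partition `P = (X1, V \ X1)`. -/
def arcWeight {V : Type*} [DecidableEq V] (c : V × V → ℝ)
    (f : V × V → Matrix (Fin 2) (Fin 2) ℝ) (X1 : Finset V) (a : V × V) : ℝ :=
  c a * (if a.1 ∈ X1 then (if a.2 ∈ X1 then f a 0 0 else f a 0 1)
         else (if a.2 ∈ X1 then f a 1 0 else f a 1 1))

/-- The weight `w^P(D)` of the digraph with arc set `A` under the partition
`P = (X1, V \ X1)`. -/
def partWeight {V : Type*} [DecidableEq V] (A : Finset (V × V)) (c : V × V → ℝ)
    (f : V × V → Matrix (Fin 2) (Fin 2) ℝ) (X1 : Finset V) : ℝ :=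
  ∑ a ∈ A, arcWeight c f X1 a

/-- Reduction of Directed Minimum `(s,t)`-cut to MWDP: add new vertices
`s' = Sum.inr 0` and `t' = Sum.inr 1` with arcs `s' → s` and `t → t'`; every arc of `D`
carries cost `1` and matrix `M = !![1,0;1,1]`, the arc `s's` carries `S = !![m,0;0,0]`
and the arc `tt'` carries `T = !![0,0;0,m]`, where `m = |A(D)|`.  The maximum partition
weight of the new digraph equals `3m` minus the minimum number of arcs from `X1` to `X2`
over all partitions `(X1, X2)` of `V(D)` with `s ∈ X1` and `t ∈ X2`. -/
theorem min_st_cut_reduction {V : Type*} [Fintype V] [DecidableEq V]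
    (A : Finset (V × V)) (s t : V)
    (hloop : ∀ a ∈ A, a.1 ≠ a.2)
    (hst : s ≠ t) :
    let m : ℝ := (A.card : ℝ)
    let Astar : Finset ((V ⊕ Fin 2) × (V ⊕ Fin 2)) :=
      A.image (fun a => ((Sum.inl a.1 : V ⊕ Fin 2), (Sum.inl a.2 : V ⊕ Fin 2))) ∪
        {((Sum.inr 0 : V ⊕ Fin 2), Sum.inl s), ((Sum.inl t : V ⊕ Fin 2), Sum.inr 1)}
    let fstar : (V ⊕ Fin 2) × (V ⊕ Fin 2) → Matrix (Fin 2) (Fin 2) ℝ := fun a =>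
      match a.1, a.2 with
      | Sum.inr _, _ => !![m, 0; 0, 0]
      | _, Sum.inr _ => !![0, 0; 0, m]
      | _, _ => !![1, 0; 1, 1]
    sSup (Set.range fun X1 : Finset (V ⊕ Fin 2) =>
        partWeight Astar (fun _ => 1) fstar X1)
      = 3 * m - sInf {k : ℝ | ∃ X1 : Finset V, s ∈ X1 ∧ t ∉ X1 ∧
          k = ((A.filter (fun a => a.1 ∈ X1 ∧ a.2 ∉ X1)).card : ℝ)} := by
  intro m Astar fstar
  have hm : m = (A.card : ℝ) := rfl
  have hA : Astar = A.image (fun a => ((Sum.inl a.1 : V ⊕ Fin 2), (Sum.inl a.2 : V ⊕ Fin 2))) ∪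
        {((Sum.inr 0 : V ⊕ Fin 2), Sum.inl s), ((Sum.inl t : V ⊕ Fin 2), Sum.inr 1)} := rfl
  have hf : fstar = fun a : (V ⊕ Fin 2) × (V ⊕ Fin 2) =>
      match a.1, a.2 with
      | Sum.inr _, _ => !![m, 0; 0, 0]
      | _, Sum.inr _ => !![0, 0; 0, m]
      | _, _ => !![1, 0; 1, 1] := rfl
  -- the partition weight formula
  have hW : ∀ X1 : Finset (V ⊕ Fin 2),
      partWeight Astar (fun _ => 1) fstar X1 =
        (m - ((A.filter (fun a => Sum.inl a.1 ∈ X1 ∧ Sum.inl a.2 ∉ X1)).card : ℝ))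
        + (if (Sum.inr 0 : V ⊕ Fin 2) ∈ X1 ∧ (Sum.inl s : V ⊕ Fin 2) ∈ X1 then m else 0)
        + (if (Sum.inl t : V ⊕ Fin 2) ∉ X1 ∧ (Sum.inr 1 : V ⊕ Fin 2) ∉ X1 then m else 0) := by
    intro X1
    have hdisj : Disjoint
        (A.image (fun a => ((Sum.inl a.1 : V ⊕ Fin 2), (Sum.inl a.2 : V ⊕ Fin 2))))
        ({((Sum.inr 0 : V ⊕ Fin 2), Sum.inl s), ((Sum.inl t : V ⊕ Fin 2), Sum.inr 1)} :
          Finset ((V ⊕ Fin 2) × (V ⊕ Fin 2))) := by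
      simp [Finset.disjoint_left, Prod.ext_iff]
    rw [partWeight, hA, Finset.sum_union hdisj]
    rw [Finset.sum_image (by simp [Prod.ext_iff])]
    rw [Finset.sum_pair (by simp [Prod.ext_iff])]
    have h1 : ∀ a ∈ A, arcWeight (fun _ => 1) fstar X1 ((Sum.inl a.1 : V ⊕ Fin 2), Sum.inl a.2)
        = if Sum.inl a.1 ∈ X1 ∧ Sum.inl a.2 ∉ X1 then 0 else 1 := by
      intro a _
      simp only [arcWeight, hf]
      by_cases h1 : (Sum.inl a.1 : V ⊕ Fin 2) ∈ X1 <;>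
        by_cases h2 : (Sum.inl a.2 : V ⊕ Fin 2) ∈ X1 <;>
        simp [h1, h2]
    rw [Finset.sum_congr rfl h1]
    have h2 : arcWeight (fun _ => 1) fstar X1 ((Sum.inr 0 : V ⊕ Fin 2), Sum.inl s)
        = if (Sum.inr 0 : V ⊕ Fin 2) ∈ X1 ∧ (Sum.inl s : V ⊕ Fin 2) ∈ X1 then m else 0 := by
      simp only [arcWeight, hf]
      by_cases h1 : (Sum.inr 0 : V ⊕ Fin 2) ∈ X1 <;>
        by_cases h2 : (Sum.inl s : V ⊕ Fin 2) ∈ X1 <;> simp [h1, h2]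
    have h3 : arcWeight (fun _ => 1) fstar X1 ((Sum.inl t : V ⊕ Fin 2), Sum.inr 1)
        = if (Sum.inl t : V ⊕ Fin 2) ∉ X1 ∧ (Sum.inr 1 : V ⊕ Fin 2) ∉ X1 then m else 0 := by
      simp only [arcWeight, hf]
      by_cases h1 : (Sum.inl t : V ⊕ Fin 2) ∈ X1 <;>
        by_cases h2 : (Sum.inr 1 : V ⊕ Fin 2) ∈ X1 <;> simp [h1, h2]
    rw [h2, h3]
    have h4 : ∑ a ∈ A, (if Sum.inl a.1 ∈ X1 ∧ Sum.inl a.2 ∉ X1 then (0:ℝ) else 1)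
        = m - ((A.filter (fun a => Sum.inl a.1 ∈ X1 ∧ Sum.inl a.2 ∉ X1)).card : ℝ) := by
      have : ∀ a ∈ A, (if Sum.inl a.1 ∈ X1 ∧ Sum.inl a.2 ∉ X1 then (0:ℝ) else 1)
          = 1 - (if Sum.inl a.1 ∈ X1 ∧ Sum.inl a.2 ∉ X1 then (1:ℝ) else 0) := by
        intro a _; by_cases h : Sum.inl a.1 ∈ X1 ∧ Sum.inl a.2 ∉ X1 <;> simp [h]
      rw [Finset.sum_congr rfl this, Finset.sum_sub_distrib, Finset.sum_const,
        Finset.sum_boole]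
      simp [hm]
    rw [h4]
    ring
  -- the cut-value set
  set K : Set ℝ := {k : ℝ | ∃ X1 : Finset V, s ∈ X1 ∧ t ∉ X1 ∧
      k = ((A.filter (fun a => a.1 ∈ X1 ∧ a.2 ∉ X1)).card : ℝ)} with hK
  have hKne : K.Nonempty := ⟨_, ⟨{s}, Finset.mem_singleton_self s,
    by simp [Ne.symm hst], rfl⟩⟩
  have hKfin : K.Finite := by
    have : K ⊆ Set.range (fun X1 : Finset V =>
        ((A.filter (fun a => a.1 ∈ X1 ∧ a.2 ∉ X1)).card : ℝ)) := by
      rintro k ⟨X1, _, _, rfl⟩; exact ⟨X1, rfl⟩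
    exact (Set.finite_range _).subset this
  set μ : ℝ := sInf K with hμ
  have hμmem : μ ∈ K := hKne.csInf_mem hKfin
  have hμle : ∀ k ∈ K, μ ≤ k := fun k hk => csInf_le hKfin.bddBelow hk
  have hKm : ∀ k ∈ K, k ≤ m := by
    rintro k ⟨X1, _, _, rfl⟩
    exact_mod_cast Nat.cast_le.mpr (Finset.card_filter_le _ _)
  have hK0 : ∀ k ∈ K, 0 ≤ k := by rintro k ⟨X1, _, _, rfl⟩; positivity
  have hμm : μ ≤ m := le_trans (hμle _ hKne.some_mem) (hKm _ hKne.some_mem)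
  -- upper bound
  have hub : ∀ X1 : Finset (V ⊕ Fin 2),
      partWeight Astar (fun _ => 1) fstar X1 ≤ 3 * m - μ := by
    intro X1
    rw [hW X1]
    set c : ℝ := ((A.filter (fun a => Sum.inl a.1 ∈ X1 ∧ Sum.inl a.2 ∉ X1)).card : ℝ) with hc
    have hc0 : 0 ≤ c := by rw [hc]; exact Nat.cast_nonneg _
    by_cases hs1 : (Sum.inl s : V ⊕ Fin 2) ∈ X1
    · by_cases ht1 : (Sum.inl t : V ⊕ Fin 2) ∈ X1
      · -- t-term is 0, bound by 2m
        have : (if (Sum.inl t : V ⊕ Fin 2) ∉ X1 ∧ (Sum.inr 1 : V ⊕ Fin 2) ∉ X1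
            then m else 0) = 0 := by simp [ht1]
        rw [this]
        have hsterm : (if (Sum.inr 0 : V ⊕ Fin 2) ∈ X1 ∧ (Sum.inl s : V ⊕ Fin 2) ∈ X1
            then m else 0) ≤ m := by split <;> simp [hm]
        nlinarith [hμm]
      · -- main case : s ∈, t ∉ : c ∈ K
        have hcK : c ∈ K := by
          refine ⟨Finset.univ.filter (fun v => (Sum.inl v : V ⊕ Fin 2) ∈ X1), ?_, ?_, ?_⟩
          · simp [hs1]
          · simp [ht1]
          · rw [hc]; congr 1; apply Finset.card_bij (fun a _ => a) <;> simp
        have h1 := hμle _ hcK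
        have hsterm : (if (Sum.inr 0 : V ⊕ Fin 2) ∈ X1 ∧ (Sum.inl s : V ⊕ Fin 2) ∈ X1
            then m else 0) ≤ m := by split <;> simp [hm]
        have htterm : (if (Sum.inl t : V ⊕ Fin 2) ∉ X1 ∧ (Sum.inr 1 : V ⊕ Fin 2) ∉ X1
            then m else 0) ≤ m := by split <;> simp [hm]
        linarith
    · -- s-term is 0
      have : (if (Sum.inr 0 : V ⊕ Fin 2) ∈ X1 ∧ (Sum.inl s : V ⊕ Fin 2) ∈ X1
          then m else 0) = 0 := by simp [hs1]
      rw [this]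
      have htterm : (if (Sum.inl t : V ⊕ Fin 2) ∉ X1 ∧ (Sum.inr 1 : V ⊕ Fin 2) ∉ X1
          then m else 0) ≤ m := by split <;> simp [hm]
      linarith [hμm]
  -- achieving partition
  obtain ⟨Y, hsY, htY, hYval⟩ := hμmem
  set X1 : Finset (V ⊕ Fin 2) := Y.image Sum.inl ∪ {Sum.inr 0} with hX1
  have hach : partWeight Astar (fun _ => 1) fstar X1 = 3 * m - μ := by
    rw [hW X1]
    have hmem : ∀ v : V, (Sum.inl v : V ⊕ Fin 2) ∈ X1 ↔ v ∈ Y := by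
      intro v; simp [hX1]
    have e1 : ((Sum.inr 0 : V ⊕ Fin 2) ∈ X1 ∧ (Sum.inl s : V ⊕ Fin 2) ∈ X1) := by
      constructor
      · simp [hX1]
      · exact (hmem s).mpr hsY
    have e2 : ((Sum.inl t : V ⊕ Fin 2) ∉ X1 ∧ (Sum.inr 1 : V ⊕ Fin 2) ∉ X1) := by
      constructor
      · rw [hmem t]; exact htY
      · simp [hX1, Fin.ext_iff]
    rw [if_pos e1, if_pos e2]
    have hfilt : A.filter (fun a => Sum.inl a.1 ∈ X1 ∧ Sum.inl a.2 ∉ X1)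
        = A.filter (fun a => a.1 ∈ Y ∧ a.2 ∉ Y) := by
      apply Finset.filter_congr; intro a _; rw [hmem a.1, hmem a.2]
    rw [hfilt, ← hYval]
    ring
  -- conclude
  have hRfin : (Set.range fun X1 : Finset (V ⊕ Fin 2) =>
      partWeight Astar (fun _ => 1) fstar X1).Finite := Set.finite_range _
  apply le_antisymm
  · refine csSup_le ⟨partWeight Astar (fun _ => 1) fstar X1, ⟨X1, rfl⟩⟩ ?_
    rintro x ⟨X2, rfl⟩
    exact hub X2
  · rw [← hach]
    exact le_csSup hRfin.bddAbove ⟨X1, rfl⟩
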